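/- arXiv:2204.11633 — 2 statements merged into one kernel-verified Lean document; each statement's English description precedes it below -/
import Mathlib

section
/- Let H be a complex Hilbert space and let T, S be bounded operators on H with polar decompositions T = U_T|T| and S = U_S|S|, where |T| = (T*T)^{1/2}. For every bounded operator A on H, setting X = TAS and Y = |T|·A·|S*|, one has |X| = U_S*·|Y|·U_S. -/
open ContinuousLinearMap

noncomputable def absOp {H K : Type*} [NormedAddCommGroup H] [InnerProductSpace ℂ H]
    [CompleteSpace H] [NormedAddCommGroup K] [InnerProductSpace ℂ K] [CompleteSpace K]
    (T : H →L[ℂ] K) : H →L[ℂ] H :=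
  CFC.sqrt (ContinuousLinearMap.adjoint T ∘L T)

noncomputable def projCR {H K : Type*} [NormedAddCommGroup H] [InnerProductSpace ℂ H]
    [CompleteSpace H] [NormedAddCommGroup K] [InnerProductSpace ℂ K] [CompleteSpace K]
    (C : K →L[ℂ] H) : H →L[ℂ] H :=
  letI := (LinearMap.range (C : K →ₗ[ℂ] H)).topologicalClosure.isClosed_topologicalClosure.completeSpace_coe
  (LinearMap.range (C : K →ₗ[ℂ] H)).topologicalClosure.subtypeL ∘L
    Submodule.orthogonalProjectionOnto (LinearMap.range (C : K →ₗ[ℂ] H)).topologicalClosure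

/-- `B = U|B|` is the polar decomposition: `U` is a partial isometry (automatic) whose
initial projection `U*U` is the orthogonal projection onto the closure of `range B*`. -/
noncomputable def IsPolarDecomp {H K : Type*} [NormedAddCommGroup H] [InnerProductSpace ℂ H]
    [CompleteSpace H] [NormedAddCommGroup K] [InnerProductSpace ℂ K] [CompleteSpace K]
    (B U : H →L[ℂ] K) : Prop :=
  B = U ∘L absOp B ∧
    ContinuousLinearMap.adjoint U ∘L U = projCR (ContinuousLinearMap.adjoint B)

variable {H : Type*} [NormedAddCommGroup H] [InnerProductSpace ℂ H] [CompleteSpace H]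

/-!
Since `S = U_S |S|` with `|S| U_S* U_S = |S|`, one gets `|S*| = U_S |S| U_S*` and hence
`S = |S*| U_S`, so `X = (T A |S*|) U_S`. The modulus is insensitive to replacing `T` by `|T|` on
the left (both give the same `X* X`), and conjugating by a partial isometry `U` whose final
projection `U U*` is absorbed on the right gives `|Y U| = U* |Y| U`; both follow from uniqueness
of positive square roots.
-/

lemma absOp_eq_sqrt (B : H →L[ℂ] H) : absOp B = CFC.sqrt (star B * B) := by
  rw [absOp, mul_def, star_eq_adjoint]

lemma absOp_nonneg (B : H →L[ℂ] H) : 0 ≤ absOp B := CFC.sqrt_nonneg _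

lemma isSelfAdjoint_absOp (B : H →L[ℂ] H) : IsSelfAdjoint (absOp B) :=
  IsSelfAdjoint.of_nonneg (absOp_nonneg B)

lemma absOp_mul_absOp (B : H →L[ℂ] H) : absOp B * absOp B = star B * B := by
  rw [absOp_eq_sqrt]
  exact CFC.sqrt_mul_sqrt_self _ (star_mul_self_nonneg B)

lemma absOp_eq_of_mul_self {B R : H →L[ℂ] H} (hR : 0 ≤ R) (h : R * R = star B * B) :
    absOp B = R := by
  rw [absOp_eq_sqrt]
  exact CFC.sqrt_unique h hR

lemma absOp_of_nonneg {R : H →L[ℂ] H} (hR : 0 ≤ R) : absOp R = R :=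
  absOp_eq_of_mul_self hR (by rw [hR.isSelfAdjoint.star_eq])

lemma norm_absOp_apply (B : H →L[ℂ] H) (x : H) : ‖absOp B x‖ = ‖B x‖ := by
  have h : inner ℂ (absOp B x) (absOp B x) = inner ℂ (B x) (B x) := by
    rw [← adjoint_inner_right, (isSelfAdjoint_absOp B).adjoint_eq, ← comp_apply, ← mul_def,
      absOp_mul_absOp, mul_def, comp_apply, star_eq_adjoint, adjoint_inner_right]
  have hsq : ‖absOp B x‖ ^ 2 = ‖B x‖ ^ 2 := by
    rw [norm_sq_eq_re_inner (𝕜 := ℂ), norm_sq_eq_re_inner (𝕜 := ℂ), h]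
  exact (sq_eq_sq₀ (norm_nonneg _) (norm_nonneg _)).mp hsq

/-- `|B|` and `B` have the same kernel, so right factors fixed by `B` are fixed by `|B|`. -/
lemma absOp_mul_eq_of_mul_eq {B E : H →L[ℂ] H} (h : B * E = B) :
    absOp B * E = absOp B := by
  suffices absOp B * (1 - E) = 0 by rwa [mul_sub, mul_one, sub_eq_zero, eq_comm] at this
  ext x
  have hB : B * (1 - E) = 0 := by rw [mul_sub, mul_one, h, sub_self]
  rw [mul_def, comp_apply, zero_apply, ← norm_eq_zero, norm_absOp_apply, ← comp_apply,
    ← mul_def, hB, zero_apply, norm_zero]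

lemma absOp_absOp_mul (T C : H →L[ℂ] H) : absOp (absOp T * C) = absOp (T * C) := by
  rw [absOp_eq_sqrt (absOp T * C), absOp_eq_sqrt (T * C), star_mul,
    (isSelfAdjoint_absOp T).star_eq, mul_assoc, ← mul_assoc (absOp T), absOp_mul_absOp, star_mul]
  simp only [mul_assoc]

lemma absOp_mul_eq_star_conj {Y U : H →L[ℂ] H} (h : Y * (U * star U) = Y) :
    absOp (Y * U) = star U * absOp Y * U := by
  have hY : absOp Y * (U * star U) = absOp Y := absOp_mul_eq_of_mul_eq h
  refine absOp_eq_of_mul_self (star_left_conjugate_nonneg (absOp_nonneg Y) U) ?_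
  calc star U * absOp Y * U * (star U * absOp Y * U)
      = star U * (absOp Y * (U * star U)) * absOp Y * U := by simp only [mul_assoc]
    _ = star (Y * U) * (Y * U) := by
      rw [hY, star_mul, mul_assoc (star U), absOp_mul_absOp]; simp only [mul_assoc]

lemma projCR_mul_self (C : H →L[ℂ] H) : projCR C * C = C := by
  have := (LinearMap.range (C : H →ₗ[ℂ] H)).isClosed_topologicalClosure.completeSpace_coe
  ext x
  have hmem : C x ∈ (LinearMap.range (C : H →ₗ[ℂ] H)).topologicalClosure :=
    Submodule.le_topologicalClosure _ (LinearMap.mem_range_self (C : H →ₗ[ℂ] H) x)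
  simp only [mul_def, projCR, comp_apply]
  rw [Submodule.orthogonalProjectionOnto_mem_subspace_eq_self ⟨C x, hmem⟩]
  rfl

lemma isSelfAdjoint_projCR (C : H →L[ℂ] H) : IsSelfAdjoint (projCR C) := by
  have := (LinearMap.range (C : H →ₗ[ℂ] H)).isClosed_topologicalClosure.completeSpace_coe
  exact isSelfAdjoint_starProjection _

namespace IsPolarDecomp

variable {S U : H →L[ℂ] H}

lemma eq_mul_absOp (hS : IsPolarDecomp S U) : S = U * absOp S := hS.1

lemma mul_star_mul_self (hS : IsPolarDecomp S U) : S * (star U * U) = S := by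
  have hP : star U * U = projCR (star S) := by rw [star_eq_adjoint, star_eq_adjoint, ← hS.2]; rfl
  have h := congrArg star (projCR_mul_self (star S))
  rwa [star_mul, star_star, (isSelfAdjoint_projCR _).star_eq, ← hP] at h

lemma absOp_mul_star_mul_self (hS : IsPolarDecomp S U) : absOp S * (star U * U) = absOp S :=
  absOp_mul_eq_of_mul_eq hS.mul_star_mul_self

lemma absOp_star (hS : IsPolarDecomp S U) : absOp (star S) = U * absOp S * star U := by
  have h := absOp_mul_eq_star_conj (Y := absOp S) (U := star U)
    (by rw [star_star]; exact hS.absOp_mul_star_mul_self)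
  conv_lhs => rw [hS.eq_mul_absOp, star_mul, (isSelfAdjoint_absOp S).star_eq]
  rwa [star_star, absOp_of_nonneg (absOp_nonneg S)] at h

lemma absOp_star_mul (hS : IsPolarDecomp S U) : absOp (star S) * U = S := by
  rw [hS.absOp_star, mul_assoc _ (star U), mul_assoc U, hS.absOp_mul_star_mul_self,
    ← hS.eq_mul_absOp]

lemma absOp_star_mul_mul_star (hS : IsPolarDecomp S U) :
    absOp (star S) * (U * star U) = absOp (star S) := by
  rw [← mul_assoc, hS.absOp_star_mul, hS.absOp_star, ← hS.eq_mul_absOp]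

end IsPolarDecomp

theorem stmt0_general (T S A U_S : H →L[ℂ] H)
    (hS : IsPolarDecomp S U_S) :
    absOp (T ∘L A ∘L S) =
      ContinuousLinearMap.adjoint U_S ∘L
        absOp (absOp T ∘L A ∘L absOp (ContinuousLinearMap.adjoint S)) ∘L U_S := by
  simp only [← mul_def, ← star_eq_adjoint]
  calc absOp (T * (A * S))
      = absOp (T * A * absOp (star S) * U_S) := by
        rw [mul_assoc, mul_assoc, hS.absOp_star_mul]
    _ = star U_S * absOp (T * A * absOp (star S)) * U_S :=
        absOp_mul_eq_star_conj (by rw [mul_assoc, hS.absOp_star_mul_mul_star])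
    _ = star U_S * absOp (absOp T * (A * absOp (star S))) * U_S := by
        rw [absOp_absOp_mul, mul_assoc T]

theorem stmt0 (T S A U_T U_S : H →L[ℂ] H)
    (hT : IsPolarDecomp T U_T) (hS : IsPolarDecomp S U_S) :
    absOp (T ∘L A ∘L S) =
      ContinuousLinearMap.adjoint U_S ∘L
        absOp (absOp T ∘L A ∘L absOp (ContinuousLinearMap.adjoint S)) ∘L U_S :=
  stmt0_general T S A U_S hS
end

section
/- Let H be a complex Hilbert space and let T, A, S be bounded operators on H with polar decompositions T = U_T|T|, A = U_A|A|, S = U_S|S|. Set Y = |T|·A·|S*| and W = U_T*U_T U_A U_S U_S*. If Y = W|Y| and the closure of range(W) equals the closure of range(Y), then W is a partial isometry and Y = W|Y| is the polar decomposition of Y (i.e., W*W is the projection onto the closure of range(Y*)). -/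
open ContinuousLinearMap

/-!
A product of partial isometries is a contraction, and `Y = W|Y|` makes `W` isometric on
`M = closure (range |Y|) = closure (range Y*)`. A contraction that preserves the norm of `x`
satisfies `W*W x = x`, so `W*W` is the identity on `M`. The image `W(M)` is closed and contains
`range Y`, so the range hypothesis gives `range W ⊆ W(M)`: for `q ⊥ M` write `W q = W m` with
`m ∈ M`, then `‖W q‖² = ⟪q, W*W m⟫ = ⟪q, m⟫ = 0`. Hence `W*W` is the projection onto `M`, and
`W` vanishes on `M⊥`, which gives `W W* W = W`.
-/

open scoped InnerProductSpace

section NormedSpace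

variable {𝕜 E F : Type*} [NontriviallyNormedField 𝕜] [NormedAddCommGroup E] [NormedSpace 𝕜 E]
  [NormedAddCommGroup F] [NormedSpace 𝕜 F]

lemma ContinuousLinearMap.opNorm_comp_le_one {G : Type*} [NormedAddCommGroup G] [NormedSpace 𝕜 G]
    {f : E →L[𝕜] F} {g : G →L[𝕜] E}
    (hf : ‖f‖ ≤ 1) (hg : ‖g‖ ≤ 1) : ‖f ∘L g‖ ≤ 1 :=
  (opNorm_comp_le f g).trans (mul_le_one₀ hf (norm_nonneg _) hg)

lemma ContinuousLinearMap.isClosed_map_of_norm_apply_eq {W : E →L[𝕜] F} {M : Submodule 𝕜 E}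
    [CompleteSpace M] (hW : ∀ m ∈ M, ‖W m‖ = ‖m‖) : IsClosed (M.map (W : E →ₗ[𝕜] F) : Set F) := by
  have hiso : Isometry (W ∘L M.subtypeL) :=
    AddMonoidHomClass.isometry_of_norm _ fun m ↦ hW m m.2
  have := hiso.isClosedEmbedding.isClosed_range
  rw [coe_comp, Set.range_comp, Submodule.coe_subtypeL, Submodule.coe_subtype,
    Subtype.range_coe] at this
  simpa only [Submodule.map_coe, coe_coe] using this

end NormedSpace

namespace ContinuousLinearMap

variable {E F : Type*} [NormedAddCommGroup E] [InnerProductSpace ℂ E] [CompleteSpace E]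
  [NormedAddCommGroup F] [InnerProductSpace ℂ F] [CompleteSpace F]

lemma projCR_eq_starProjection (C : F →L[ℂ] E) :
    projCR C = (LinearMap.range (C : F →ₗ[ℂ] E)).topologicalClosure.starProjection := rfl

lemma norm_le_one_of_isPolarDecomp {B U : E →L[ℂ] F} (h : IsPolarDecomp B U) : ‖U‖ ≤ 1 := by
  have hUU : ‖U‖ * ‖U‖ ≤ 1 := by
    rw [← norm_adjoint_comp_self, h.2, projCR_eq_starProjection]
    exact Submodule.starProjection_norm_le _
  nlinarith [norm_nonneg U]

lemma absOp_comp_absOp (B : E →L[ℂ] F) : absOp B ∘L absOp B = adjoint B ∘L B :=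
  CFC.sqrt_mul_sqrt_self _ (nonneg_iff_isPositive _ |>.mpr (isPositive_adjoint_comp_self B))

lemma adjoint_absOp (B : E →L[ℂ] F) : adjoint (absOp B) = absOp B :=
  isSelfAdjoint_iff'.mp (CFC.sqrt_nonneg _).isSelfAdjoint

lemma norm_absOp_apply (B : E →L[ℂ] F) (x : E) : ‖absOp B x‖ = ‖B x‖ := by
  have key : ‖absOp B x‖ ^ 2 = ‖B x‖ ^ 2 := by
    rw [apply_norm_sq_eq_inner_adjoint_left, apply_norm_sq_eq_inner_adjoint_left, adjoint_absOp,
      absOp_comp_absOp]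
  exact (pow_left_inj₀ (norm_nonneg _) (norm_nonneg _) two_ne_zero).mp key

lemma ker_absOp (B : E →L[ℂ] F) : (absOp B).ker = B.ker := by
  ext x
  simp only [LinearMap.mem_ker, coe_coe, ← norm_eq_zero (a := absOp B x), norm_absOp_apply,
    norm_eq_zero]

lemma closure_range_absOp (B : E →L[ℂ] F) :
    (absOp B).range.topologicalClosure = (adjoint B).range.topologicalClosure := by
  rw [← orthogonal_ker, ← ker_absOp, orthogonal_ker, adjoint_absOp]

lemma norm_apply_eq_of_mem_closure_range_absOp {Y W : E →L[ℂ] F} (hY : Y = W ∘L absOp Y) :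
    ∀ m ∈ (absOp Y).range.topologicalClosure, ‖W m‖ = ‖m‖ := by
  have hrange : Set.EqOn (fun v ↦ ‖W v‖) (fun v ↦ ‖v‖) (absOp Y).range := by
    rintro _ ⟨x, rfl⟩
    simp only [coe_coe, ← comp_apply, ← hY, norm_absOp_apply]
  exact hrange.closure (by fun_prop) (by fun_prop)

lemma range_le_map_closure_range_absOp {Y W : E →L[ℂ] F} (hY : Y = W ∘L absOp Y)
    (hR : (LinearMap.range (W : E →ₗ[ℂ] F)).topologicalClosure =
      (LinearMap.range (Y : E →ₗ[ℂ] F)).topologicalClosure) :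
    LinearMap.range (W : E →ₗ[ℂ] F) ≤
      (absOp Y).range.topologicalClosure.map (W : E →ₗ[ℂ] F) := by
  have hYM : LinearMap.range (Y : E →ₗ[ℂ] F) ≤
      (absOp Y).range.topologicalClosure.map (W : E →ₗ[ℂ] F) := by
    rintro _ ⟨x, rfl⟩
    exact ⟨absOp Y x, Submodule.le_topologicalClosure _ ⟨x, rfl⟩, DFunLike.congr_fun hY.symm x⟩
  calc LinearMap.range (W : E →ₗ[ℂ] F) ≤ (LinearMap.range (W : E →ₗ[ℂ] F)).topologicalClosure :=
        Submodule.le_topologicalClosure _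
    _ ≤ _ := hR ▸ Submodule.topologicalClosure_minimal _ hYM
        (isClosed_map_of_norm_apply_eq (norm_apply_eq_of_mem_closure_range_absOp hY))

section PartialIsometry

variable {W : E →L[ℂ] F} (hW : ‖W‖ ≤ 1)
include hW

lemma adjoint_apply_apply_of_norm_apply_eq {x : E} (hx : ‖W x‖ = ‖x‖) : adjoint W (W x) = x := by
  have hle : ‖adjoint W (W x)‖ ≤ ‖x‖ := by
    simpa [hx] using (adjoint W).le_of_opNorm_le ((adjoint.norm_map W).trans_le hW) (W x)
  have hinner : RCLike.re ⟪adjoint W (W x), x⟫_ℂ = ‖x‖ ^ 2 := by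
    rw [adjoint_inner_left, inner_self_eq_norm_sq, hx]
  have hsq : ‖adjoint W (W x) - x‖ ^ 2 ≤ 0 := by
    rw [@norm_sub_sq ℂ, hinner]
    nlinarith [norm_nonneg (adjoint W (W x))]
  have hzero : ‖adjoint W (W x) - x‖ ^ 2 = 0 := hsq.antisymm (by positivity)
  exact sub_eq_zero.mp (norm_eq_zero.mp (pow_eq_zero_iff two_ne_zero |>.mp hzero))

variable {M : Submodule ℂ E} (hM : ∀ m ∈ M, ‖W m‖ = ‖m‖)
    (hrange : LinearMap.range (W : E →ₗ[ℂ] F) ≤ M.map (W : E →ₗ[ℂ] F))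
include hM hrange

lemma apply_eq_zero_of_mem_orthogonal {q : E} (hq : q ∈ Mᗮ) : W q = 0 := by
  obtain ⟨m, hm, hmq⟩ := hrange ⟨q, rfl⟩
  rw [coe_coe] at hmq
  rw [← inner_self_eq_zero (𝕜 := ℂ)]
  nth_rewrite 1 [← hmq]
  rw [← adjoint_inner_left, adjoint_apply_apply_of_norm_apply_eq hW (hM m hm)]
  exact Submodule.inner_right_of_mem_orthogonal hm hq

variable [M.HasOrthogonalProjection]

lemma comp_starProjection_eq_self : W ∘L M.starProjection = W := by
  ext x
  have hx := apply_eq_zero_of_mem_orthogonal hW hM hrange (M.sub_starProjection_mem_orthogonal x)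
  rw [map_sub, sub_eq_zero] at hx
  exact hx.symm

theorem adjoint_comp_self_eq_starProjection : adjoint W ∘L W = M.starProjection := by
  ext x
  calc adjoint W (W x) = adjoint W (W (M.starProjection x)) := by
        rw [← comp_apply W, comp_starProjection_eq_self hW hM hrange]
    _ = M.starProjection x :=
        adjoint_apply_apply_of_norm_apply_eq hW (hM _ (M.starProjection_apply_mem x))

end PartialIsometry

end ContinuousLinearMap

variable {H : Type*} [NormedAddCommGroup H] [InnerProductSpace ℂ H] [CompleteSpace H]

theorem stmt12 (T A S U_T U_A U_S : H →L[ℂ] H)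
    (hT : IsPolarDecomp T U_T) (hA : IsPolarDecomp A U_A) (hS : IsPolarDecomp S U_S)
    (W : H →L[ℂ] H)
    (hWdef : W = ContinuousLinearMap.adjoint U_T ∘L U_T ∘L U_A ∘L U_S ∘L
      ContinuousLinearMap.adjoint U_S)
    (hY : absOp T ∘L A ∘L absOp (ContinuousLinearMap.adjoint S) =
      W ∘L absOp (absOp T ∘L A ∘L absOp (ContinuousLinearMap.adjoint S)))
    (hR : (LinearMap.range (W : H →ₗ[ℂ] H)).topologicalClosure =
      (LinearMap.range ((absOp T ∘L A ∘L absOp (ContinuousLinearMap.adjoint S) : H →L[ℂ] H) : H →ₗ[ℂ] H)).topologicalClosure) :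
    W ∘L ContinuousLinearMap.adjoint W ∘L W = W ∧
      IsPolarDecomp (absOp T ∘L A ∘L absOp (ContinuousLinearMap.adjoint S)) W := by
  have hW : ‖W‖ ≤ 1 := by
    have hU {B U : H →L[ℂ] H} (h : IsPolarDecomp B U) : ‖adjoint U‖ ≤ 1 :=
      (adjoint.norm_map U).trans_le (norm_le_one_of_isPolarDecomp h)
    rw [hWdef]
    exact opNorm_comp_le_one (hU hT) <| opNorm_comp_le_one (norm_le_one_of_isPolarDecomp hT) <|
      opNorm_comp_le_one (norm_le_one_of_isPolarDecomp hA) <|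
      opNorm_comp_le_one (norm_le_one_of_isPolarDecomp hS) (hU hS)
  have hM := norm_apply_eq_of_mem_closure_range_absOp hY
  have hrange := range_le_map_closure_range_absOp hY hR
  have hproj := adjoint_comp_self_eq_starProjection hW hM hrange
  refine ⟨?_, hY, ?_⟩
  · rw [hproj, comp_starProjection_eq_self hW hM hrange]
  · rw [hproj, projCR_eq_starProjection]
    congr! 1
    exact closure_range_absOp _
end
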